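/- arXiv:hep-th/0412162 — 3 statements merged into one kernel-verified Lean document; each statement's English description precedes it below -/
import Mathlib

section
/- The commutator of the derivations e and f equals the derivation L = k̲ + k̲⁻¹, i.e. e ∘ f − f ∘ e = k̲ + k̲⁻¹ as ℂ-linear derivations of A. (Equivalently, it suffices to verify the equality on the generators x, y, z of A.) -/
open LaurentPolynomial

noncomputable section

/-- The ring `A = ℂ[x, y, z, z⁻¹]`: Laurent polynomials in `z` over `ℂ[x, y]`. -/
abbrev A : Type := LaurentPolynomial (MvPolynomial (Fin 2) ℂ)

/-- The variable `x`. -/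
def Xv : A := C (MvPolynomial.X 0)

/-- The variable `y`. -/
def Yv : A := C (MvPolynomial.X 1)

/-- The variable `z`. -/
def Zv : A := T 1

/-- The variable `z⁻¹`. -/
def Zi : A := T (-1)

/-! Derivations of `R[T;T⁻¹]` are determined by their values on the coefficients and on `T`, since
`D T⁻¹ = -T⁻² D T`. For `A` this reduces the identity to the generators `x`, `y`, `z`, where it is
a direct computation. -/

namespace LaurentPolynomial

theorem T_neg_one_mul_T_one {R : Type*} [Semiring R] : (T (-1) * T 1 : R[T;T⁻¹]) = 1 := by
  rw [← T_add, neg_add_cancel, T_zero]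

variable {k M : Type*} [CommRing k] [AddCommGroup M] [Module k M]

theorem derivation_ext {R : Type*} [CommRing R] [Algebra k R] [Module R[T;T⁻¹] M]
    {D₁ D₂ : Derivation k R[T;T⁻¹] M} (hC : ∀ r, D₁ (C r) = D₂ (C r)) (hT : D₁ (T 1) = D₂ (T 1)) : D₁ = D₂ := by
  have hT_neg_one : D₁ (T (-1)) = D₂ (T (-1)) := by
    rw [D₁.leibniz_of_mul_eq_one T_neg_one_mul_T_one, D₂.leibniz_of_mul_eq_one T_neg_one_mul_T_one,
      hT]
  have hT_int (n : ℤ) : D₁ (T n) = D₂ (T n) := by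
    induction n using Int.induction_on with
    | zero => rw [T_zero, D₁.map_one_eq_zero, D₂.map_one_eq_zero]
    | succ n ih => rw [T_add, Derivation.leibniz, Derivation.leibniz, ih, hT]
    | pred n ih =>
      rw [sub_eq_add_neg, T_add, Derivation.leibniz, Derivation.leibniz, ih, hT_neg_one]
  ext a
  induction a using LaurentPolynomial.induction_on' with
  | add p q hp hq => rw [map_add, map_add, hp, hq]
  | C_mul_T n r => rw [Derivation.leibniz, Derivation.leibniz, hC, hT_int]

theorem derivation_ext_of_C_X {σ : Type*} [Module (MvPolynomial σ k)[T;T⁻¹] M]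
    [IsScalarTower k (MvPolynomial σ k)[T;T⁻¹] M] {D₁ D₂ : Derivation k (MvPolynomial σ k)[T;T⁻¹] M}
    (hX : ∀ i, D₁ (C (MvPolynomial.X i)) = D₂ (C (MvPolynomial.X i)))
    (hT : D₁ (T 1) = D₂ (T 1)) : D₁ = D₂ := by
  refine derivation_ext (fun p => ?_) hT
  induction p using MvPolynomial.induction_on with
  | C a =>
    have hC : (C (MvPolynomial.C a) : (MvPolynomial σ k)[T;T⁻¹]) = algebraMap k _ a := rfl
    rw [hC, D₁.map_algebraMap, D₂.map_algebraMap]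
  | add p q hp hq => rw [map_add, map_add, map_add, hp, hq]
  | mul_X p i hp => rw [map_mul, Derivation.leibniz, Derivation.leibniz, hp, hX]

end LaurentPolynomial

theorem Derivation.apply_Zi (D : Derivation ℂ A A) : D Zi = -Zi ^ 2 * D Zv :=
  D.leibniz_of_mul_eq_one T_neg_one_mul_T_one

/-- The commutator `e ∘ f − f ∘ e` of the derivations `e` and `f` equals the
derivation `L = k̲ + k̲⁻¹`. -/
theorem stmt1
    (e f kk kk' : Derivation ℂ A A)
    (hex : e Xv = 0) (hey : e Yv = Zv - Zi) (hez : e Zv = -(Xv * Zv))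
    (hfx : f Xv = -(Zv - Zi)) (hfy : f Yv = 0) (hfz : f Zv = Yv * Zv)
    (hkx : kk Xv = Xv * Zv) (hky : kk Yv = -(Yv * Zv)) (hkz : kk Zv = 0)
    (hk'x : kk' Xv = Xv * Zi) (hk'y : kk' Yv = -(Yv * Zi)) (hk'z : kk' Zv = 0) :
    ∀ a : A, e (f a) - f (e a) = (kk + kk') a := by
  have hZ : Zi * Zv = 1 := T_neg_one_mul_T_one
  have hezi : e Zi = Xv * Zi := by
    rw [e.apply_Zi, hez]; linear_combination Xv * Zi * hZ
  have hfzi : f Zi = -(Yv * Zi) := by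
    rw [f.apply_Zi, hfz]; linear_combination -(Yv * Zi) * hZ
  have hbracket : ⁅e, f⁆ = kk + kk' := by
    refine derivation_ext_of_C_X (Fin.forall_fin_two.2 ⟨?_, ?_⟩) ?_
    · change ⁅e, f⁆ Xv = (kk + kk') Xv
      rw [Derivation.commutator_apply, Derivation.add_apply, hfx, hex, map_neg, map_sub, hez,
        hezi, map_zero, hkx, hk'x]
      ring
    · change ⁅e, f⁆ Yv = (kk + kk') Yv
      rw [Derivation.commutator_apply, Derivation.add_apply, hfy, hey, map_zero, map_sub, hfz,
        hfzi, hky, hk'y]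
      ring
    · change ⁅e, f⁆ Zv = (kk + kk') Zv
      rw [Derivation.commutator_apply, Derivation.add_apply, hfz, hez, hkz, hk'z, map_neg,
        Derivation.leibniz, Derivation.leibniz, hey, hfx, hez, hfz, smul_eq_mul, smul_eq_mul,
        smul_eq_mul, smul_eq_mul]
      ring
  intro a
  rw [← hbracket, Derivation.commutator_apply]
end
end

section
/- For every natural number N ≥ 1, the derivation e_N of A satisfies: e_N(x) = N·x²·(z + z⁻¹)^(N−1)·(z − z⁻¹), e_N(y) = (z + z⁻¹)^N·(z − z⁻¹) − N·x·y·(z + z⁻¹)^(N−1)·(z − z⁻¹), and e_N(z + z⁻¹) = −x·(z + z⁻¹)^N·(z − z⁻¹). -/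
open LaurentPolynomial

noncomputable section

/-!
Write `W = z + z⁻¹` and `D = z - z⁻¹`. The derivation `L = k̲ + k̲⁻¹` kills `z` and `z⁻¹`, hence
`W` and `D`, and it scales `x` by `W` and `y` by `-W`. Since `e_{N+1} = ⁅L, e_N⁆` is again a
derivation, Leibniz' rule turns the three formulas for `e_N` into those for `e_{N+1}`. Read with
`N = 0` the formulas are exactly the defining values of `e` (the factor `W ^ (N - 1)` only appears
multiplied by `N`), so induction proves them for every `N`.
-/

section ActsLikeE

variable {R S : Type*} [CommRing R] [CommRing S] [Algebra R S]

def ActsLikeE (x y W D : S) (n : ℕ) (d : Derivation R S S) : Prop :=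
  d x = n * x ^ 2 * W ^ (n - 1) * D ∧
    d y = W ^ n * D - n * x * y * W ^ (n - 1) * D ∧
    d W = -(x * W ^ n * D)

lemma natCast_mul_pow_pred_mul_self (W : S) (n : ℕ) :
    (n : S) * W ^ (n - 1) * W = n * W ^ n := by
  cases n <;> simp [pow_succ, mul_assoc]

lemma ActsLikeE.commutator {L d : Derivation R S S} {x y W D : S} {n : ℕ}
    (hLx : L x = x * W) (hLy : L y = -(y * W)) (hLW : L W = 0) (hLD : L D = 0)
    (hd : ActsLikeE x y W D n d) : ActsLikeE x y W D (n + 1) ⁅L, d⁆ := by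
  obtain ⟨hdx, hdy, hdW⟩ := hd
  have hW := natCast_mul_pow_pred_mul_self W n
  refine ⟨?_, ?_, ?_⟩ <;>
    simp only [Derivation.commutator_apply, Derivation.leibniz, Derivation.leibniz_pow,
      Derivation.map_natCast, map_neg, map_sub, map_zero, smul_eq_mul, nsmul_eq_mul, hdx, hdy,
      hdW, hLx, hLy, hLW, hLD, Nat.add_sub_cancel] <;>
    push_cast
  · linear_combination x ^ 2 * D * hW
  · linear_combination (-x * y * D) * hW
  · ring

end ActsLikeE

lemma Zi_mul_Zv : Zi * Zv = 1 := by
  rw [Zv, Zi, ← T_add]; norm_num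

theorem stmt2_general
    (e kk kk' : Derivation ℂ A A)
    (hex : e Xv = 0) (hey : e Yv = Zv - Zi) (hez : e Zv = -(Xv * Zv))
    (hkx : kk Xv = Xv * Zv) (hky : kk Yv = -(Yv * Zv)) (hkz : kk Zv = 0)
    (hk'x : kk' Xv = Xv * Zi) (hk'y : kk' Yv = -(Yv * Zi)) (hk'z : kk' Zv = 0)
    (E : ℕ → Derivation ℂ A A) (hE0 : E 0 = e)
    (hEs : ∀ (n : ℕ) (a : A), E (n + 1) a = (kk + kk') (E n a) - E n ((kk + kk') a))
    (N : ℕ) :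
    E N Xv = (N : A) * Xv ^ 2 * (Zv + Zi) ^ (N - 1) * (Zv - Zi) ∧
      E N Yv = (Zv + Zi) ^ N * (Zv - Zi)
          - (N : A) * Xv * Yv * (Zv + Zi) ^ (N - 1) * (Zv - Zi) ∧
      E N (Zv + Zi) = -(Xv * (Zv + Zi) ^ N * (Zv - Zi)) := by
  have hkZi : kk Zi = 0 := by rw [kk.leibniz_of_mul_eq_one Zi_mul_Zv, hkz, smul_zero]
  have hk'Zi : kk' Zi = 0 := by rw [kk'.leibniz_of_mul_eq_one Zi_mul_Zv, hk'z, smul_zero]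
  have heZi : e Zi = Xv * Zi := by
    rw [e.leibniz_of_mul_eq_one Zi_mul_Zv, hez, smul_eq_mul]
    linear_combination Xv * Zi * Zi_mul_Zv
  have base : ActsLikeE Xv Yv (Zv + Zi) (Zv - Zi) 0 e := by
    refine ⟨?_, ?_, ?_⟩ <;> simp only [map_add, hex, hey, hez, heZi] <;> ring
  have hLx : (kk + kk') Xv = Xv * (Zv + Zi) := by rw [Derivation.add_apply, hkx, hk'x]; ring
  have hLy : (kk + kk') Yv = -(Yv * (Zv + Zi)) := by rw [Derivation.add_apply, hky, hk'y]; ring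
  have hLW : (kk + kk') (Zv + Zi) = 0 := by
    simp only [Derivation.add_apply, map_add, hkz, hk'z, hkZi, hk'Zi, add_zero]
  have hLD : (kk + kk') (Zv - Zi) = 0 := by
    simp only [Derivation.add_apply, map_sub, hkz, hk'z, hkZi, hk'Zi, add_zero, sub_zero]
  have hE : ∀ n, E (n + 1) = ⁅kk + kk', E n⁆ := fun n => Derivation.ext (hEs n)
  induction N with
  | zero => rw [hE0]; exact base
  | succ n ih => rw [hE]; exact ActsLikeE.commutator hLx hLy hLW hLD ih

/-- Values of the derivation `e_N` on `x`, `y` and `z + z⁻¹`, for `N ≥ 1`. -/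
theorem stmt2
    (e f kk kk' : Derivation ℂ A A)
    (hex : e Xv = 0) (hey : e Yv = Zv - Zi) (hez : e Zv = -(Xv * Zv))
    (hfx : f Xv = -(Zv - Zi)) (hfy : f Yv = 0) (hfz : f Zv = Yv * Zv)
    (hkx : kk Xv = Xv * Zv) (hky : kk Yv = -(Yv * Zv)) (hkz : kk Zv = 0)
    (hk'x : kk' Xv = Xv * Zi) (hk'y : kk' Yv = -(Yv * Zi)) (hk'z : kk' Zv = 0)
    (E F : ℕ → Derivation ℂ A A) (hE0 : E 0 = e) (hF0 : F 0 = f)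
    (hEs : ∀ (n : ℕ) (a : A), E (n + 1) a = (kk + kk') (E n a) - E n ((kk + kk') a))
    (hFs : ∀ (n : ℕ) (a : A), F (n + 1) a = (kk + kk') (F n a) - F n ((kk + kk') a))
    (N : ℕ) (hN : 1 ≤ N) :
    E N Xv = (N : A) * Xv ^ 2 * (Zv + Zi) ^ (N - 1) * (Zv - Zi) ∧
      E N Yv = (Zv + Zi) ^ N * (Zv - Zi)
          - (N : A) * Xv * Yv * (Zv + Zi) ^ (N - 1) * (Zv - Zi) ∧
      E N (Zv + Zi) = -(Xv * (Zv + Zi) ^ N * (Zv - Zi)) :=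
  stmt2_general e kk kk' hex hey hez hkx hky hkz hk'x hk'y hk'z E hE0 hEs N
end
end

section
/- For every natural number N ≥ 1, modulo the ideal of A generated by z + z⁻¹ + xy one has the congruence f_N(x) ≡ (−1)^N·(N+1)·x·y·(z + z⁻¹)^(N−1)·(z − z⁻¹), i.e. f_N(x) − (−1)^N·(N+1)·x·y·(z + z⁻¹)^(N−1)·(z − z⁻¹) lies in the ideal generated by z + z⁻¹ + xy. -/
open LaurentPolynomial

noncomputable section

/-!
Write `w = z + z⁻¹`, `u = z − z⁻¹`, `L = k̲ + k̲⁻¹` and `g = w + xy`. Then `L` kills `w`, `u` and `xy`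
(hence `g`), while `Lx = xw` and `Ly = −yw`. Since `Lw = 0`, `f_N(w) = Lᴺ(f w) = (−w)ᴺ y u`, and the
Leibniz rule gives `f_{N+1}(x) = L(f_N x) − w f_N(x) − x f_N(w)`. With `r_N` the claimed right-hand side,
`L r_N = 0` and the error `δ_N = f_N(x) − r_N` satisfies the exact recursion `δ_{N+1} = Lδ_N − wδ_N`.
As `δ_1 = u g` and `L` preserves the ideal `(g)` (because `Lg = 0`), every `δ_N` with `N ≥ 1` lies in `(g)`.
-/

namespace Derivation

variable {k R : Type*} [CommRing k] [CommRing R] [Algebra k R]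

theorem map_mem_span_singleton (D : Derivation k R R) {g a : R} (hg : D g = 0)
    (ha : a ∈ Ideal.span {g}) : D a ∈ Ideal.span {g} := by
  obtain ⟨c, rfl⟩ := Ideal.mem_span_singleton'.mp ha
  rw [D.leibniz, hg, smul_zero, zero_add, smul_eq_mul]
  exact Ideal.mul_mem_right _ _ (Ideal.mem_span_singleton_self g)

theorem iterate_apply_eq_pow_mul (D : Derivation k R R) {s a : R} (hs : D s = 0)
    (ha : D a = s * a) (n : ℕ) : (⇑D)^[n] a = s ^ n * a := by
  induction n with
  | zero => simp
  | succ n ih =>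
    rw [Function.iterate_succ_apply', ih, D.leibniz, D.leibniz_pow, hs, ha]
    simp only [smul_eq_mul]
    ring

section CommutatorSequence

variable {L : Derivation k R R} {F : ℕ → Derivation k R R}

theorem apply_eq_iterate_of_map_eq_zero
    (hF : ∀ n a, F (n + 1) a = L (F n a) - F n (L a)) {c : R} (hc : L c = 0) (n : ℕ) :
    F n c = (⇑L)^[n] (F 0 c) := by
  induction n with
  | zero => rfl
  | succ n ih => rw [hF, hc, map_zero, sub_zero, ih, Function.iterate_succ_apply']

theorem apply_succ_of_map_eq_mul
    (hF : ∀ n a, F (n + 1) a = L (F n a) - F n (L a)) {x w : R} (hx : L x = x * w) (n : ℕ) :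
    F (n + 1) x = L (F n x) - w * F n x - x * F n w := by
  rw [hF, hx, leibniz, smul_eq_mul, smul_eq_mul]
  ring

end CommutatorSequence

end Derivation

section CongruenceForCommutators

variable {k R : Type*} [CommRing k] [CommRing R] [Algebra k R]
  {x y w u : R} {L f : Derivation k R R} {F : ℕ → Derivation k R R}

theorem commutator_apply_eq_neg_pow_mul
    (hF : ∀ n a, F (n + 1) a = L (F n a) - F n (L a)) (hF0 : F 0 = f)
    (hLy : L y = -(y * w)) (hLw : L w = 0) (hLu : L u = 0) (hfw : f w = y * u) (n : ℕ) :
    F n w = (-w) ^ n * (y * u) := by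
  rw [Derivation.apply_eq_iterate_of_map_eq_zero hF hLw, hF0, hfw]
  refine L.iterate_apply_eq_pow_mul (by rw [map_neg, hLw, neg_zero]) ?_ n
  rw [L.leibniz, hLy, hLu, smul_eq_mul, smul_eq_mul]
  ring

theorem commutator_apply_sub_mem_span
    (hF : ∀ n a, F (n + 1) a = L (F n a) - F n (L a)) (hF0 : F 0 = f)
    (hLx : L x = x * w) (hLy : L y = -(y * w)) (hLw : L w = 0) (hLu : L u = 0)
    (hfx : f x = -u) (hfw : f w = y * u) (m : ℕ) :
    F (m + 1) x - (-1) ^ (m + 1) * (((m + 1 : ℕ) : R) + 1) * x * y * w ^ m * u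
      ∈ Ideal.span {w + x * y} := by
  have hLxy : L (x * y) = 0 := by
    rw [L.leibniz, hLx, hLy, smul_eq_mul, smul_eq_mul]
    ring
  have hLg : L (w + x * y) = 0 := by rw [map_add, hLw, hLxy, add_zero]
  have hFw := commutator_apply_eq_neg_pow_mul hF hF0 hLy hLw hLu hfw
  induction m with
  | zero =>
    refine Ideal.mem_span_singleton'.mpr ⟨u, ?_⟩
    rw [Derivation.apply_succ_of_map_eq_mul hF hLx, hF0, hfx, hfw, map_neg, hLu]
    push_cast
    ring
  | succ m ih =>
    set δ := F (m + 1) x - (-1) ^ (m + 1) * (((m + 1 : ℕ) : R) + 1) * x * y * w ^ m * u with hδ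
    have hLr : L ((-1) ^ (m + 1) * (((m + 1 : ℕ) : R) + 1) * x * y * w ^ m * u) = 0 := by
      simp only [L.leibniz, L.leibniz_pow, map_add, map_neg, L.map_natCast, L.map_one_eq_zero,
        hLx, hLy, hLw, hLu, smul_eq_mul, nsmul_zero, mul_zero, mul_neg, add_zero, zero_add,
        neg_zero]
      ring
    have hstep : F (m + 1 + 1) x
        - (-1) ^ (m + 1 + 1) * (((m + 1 + 1 : ℕ) : R) + 1) * x * y * w ^ (m + 1) * u
        = L δ - w * δ := by
      rw [hδ, map_sub, hLr, sub_zero, Derivation.apply_succ_of_map_eq_mul hF hLx, hFw]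
      push_cast
      ring
    rw [hstep]
    exact sub_mem (L.map_mem_span_singleton hLg ih) (Ideal.mul_mem_left _ _ ih)

end CongruenceForCommutators

theorem stmt9_general
    (f kk kk' : Derivation ℂ A A)
    (hfx : f Xv = -(Zv - Zi)) (hfz : f Zv = Yv * Zv)
    (hkx : kk Xv = Xv * Zv) (hky : kk Yv = -(Yv * Zv)) (hkz : kk Zv = 0)
    (hk'x : kk' Xv = Xv * Zi) (hk'y : kk' Yv = -(Yv * Zi)) (hk'z : kk' Zv = 0)
    (F : ℕ → Derivation ℂ A A) (hF0 : F 0 = f)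
    (hFs : ∀ (n : ℕ) (a : A), F (n + 1) a = (kk + kk') (F n a) - F n ((kk + kk') a))
    (N : ℕ) (hN : 1 ≤ N) :
    F N Xv - (-1 : A) ^ N * ((N : A) + 1) * Xv * Yv * (Zv + Zi) ^ (N - 1) * (Zv - Zi)
      ∈ Ideal.span {Zv + Zi + Xv * Yv} := by
  have hzz : Zi * Zv = 1 := by rw [Zv, Zi, ← T_add, neg_add_cancel, T_zero]
  have hzi (D : Derivation ℂ A A) : D Zi = -(Zi ^ 2 * D Zv) := by
    rw [D.leibniz_of_mul_eq_one hzz, smul_eq_mul]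
    ring
  obtain ⟨m, rfl⟩ := Nat.exists_eq_add_of_le' hN
  rw [Nat.add_sub_cancel]
  refine commutator_apply_sub_mem_span hFs hF0 ?_ ?_ ?_ ?_ hfx ?_ m
  · rw [Derivation.add_apply, hkx, hk'x, mul_add]
  · rw [Derivation.add_apply, hky, hk'y]
    ring
  · rw [map_add, Derivation.add_apply, Derivation.add_apply, hzi, hzi, hkz, hk'z]
    ring
  · rw [map_sub, Derivation.add_apply, Derivation.add_apply, hzi, hzi, hkz, hk'z]
    ring
  · rw [map_add, hzi, hfz]
    linear_combination -(Yv * Zi) * hzz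

/-- Modulo the ideal generated by `z + z⁻¹ + xy`, one has
`f_N(x) ≡ (−1)^N (N+1) x y (z + z⁻¹)^(N−1) (z − z⁻¹)` for `N ≥ 1`. -/
theorem stmt9
    (e f kk kk' : Derivation ℂ A A)
    (hex : e Xv = 0) (hey : e Yv = Zv - Zi) (hez : e Zv = -(Xv * Zv))
    (hfx : f Xv = -(Zv - Zi)) (hfy : f Yv = 0) (hfz : f Zv = Yv * Zv)
    (hkx : kk Xv = Xv * Zv) (hky : kk Yv = -(Yv * Zv)) (hkz : kk Zv = 0)
    (hk'x : kk' Xv = Xv * Zi) (hk'y : kk' Yv = -(Yv * Zi)) (hk'z : kk' Zv = 0)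
    (E F : ℕ → Derivation ℂ A A) (hE0 : E 0 = e) (hF0 : F 0 = f)
    (hEs : ∀ (n : ℕ) (a : A), E (n + 1) a = (kk + kk') (E n a) - E n ((kk + kk') a))
    (hFs : ∀ (n : ℕ) (a : A), F (n + 1) a = (kk + kk') (F n a) - F n ((kk + kk') a))
    (N : ℕ) (hN : 1 ≤ N) :
    F N Xv - (-1 : A) ^ N * ((N : A) + 1) * Xv * Yv * (Zv + Zi) ^ (N - 1) * (Zv - Zi)
      ∈ Ideal.span {Zv + Zi + Xv * Yv} :=
  stmt9_general f kk kk' hfx hfz hkx hky hkz hk'x hk'y hk'z F hF0 hFs N hN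
end
end
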